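/- For every θ ∈ (1/2,1) and γ ∈ (0,1), the exponent ζ_− = ln((1 − √D)/(2γθ)) / ln((1−θ)/θ), where D = 1 − 4γ²θ(1−θ), satisfies ζ_− > 1; consequently the decision boundary of the one-fair-coin bandit, β_c = −1/(2ζ_− − 1), lies in the open interval (−1, 0). -/

import Mathlib

/-!
With `b = (1 − θ)/θ ∈ (0, 1)` and `x = (1 − √D)/(2γθ)`, the claim `ζ_− > 1` is `log x < log b < 0`,
i.e. `0 < x < b`. Positivity of `x` is `D < 1`. The bound `x < b` is `1 − 2γ(1 − θ) < √D`, which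
follows from the identity `D − (1 − 2γ(1 − θ))² = 4γ(1 − θ)(1 − γ) > 0`.
-/

/-- The discriminant `D = 1 − 4γ²θ(1−θ)`. -/
noncomputable def Dq (θ γ : ℝ) : ℝ := 1 - 4 * γ ^ 2 * θ * (1 - θ)

/-- The exponent `ζ_− = ln((1 − √D)/(2γθ)) / ln((1−θ)/θ)`. -/
noncomputable def zetaMinus (θ γ : ℝ) : ℝ :=
  Real.log ((1 - Real.sqrt (Dq θ γ)) / (2 * γ * θ)) / Real.log ((1 - θ) / θ)

open Real Set

theorem one_lt_log_div_log_of_lt_of_lt_one {x b : ℝ} (hx : 0 < x) (hxb : x < b) (hb : b < 1) :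
    1 < log x / log b := by
  have hlogb : log b < 0 := log_neg (hx.trans hxb) hb
  rw [lt_div_iff_of_neg hlogb, one_mul]
  exact log_lt_log hx hxb

theorem neg_one_div_two_mul_sub_one_mem_Ioo {z : ℝ} (hz : 1 < z) :
    -1 / (2 * z - 1) ∈ Ioo (-1 : ℝ) 0 := by
  have hpos : 1 < 2 * z - 1 := by linarith
  constructor
  · rw [neg_div, neg_lt_neg_iff, div_lt_one (by linarith)]
    exact hpos
  · exact div_neg_of_neg_of_pos neg_one_lt_zero (by linarith)

section Dq

variable {θ γ : ℝ}

theorem sqrt_Dq_lt_one (hγ : 0 < γ) (hθ₀ : 0 < θ) (hθ₁ : θ < 1) : √(Dq θ γ) < 1 := by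
  rw [sqrt_lt' one_pos, one_pow, Dq, sub_lt_self_iff]
  have : 0 < 1 - θ := sub_pos.2 hθ₁
  positivity

theorem Dq_sub_sq (θ γ : ℝ) :
    Dq θ γ - (1 - 2 * γ * (1 - θ)) ^ 2 = 4 * γ * (1 - θ) * (1 - γ) := by
  rw [Dq]; ring

theorem one_sub_two_mul_lt_sqrt_Dq (hγ₀ : 0 < γ) (hγ₁ : γ < 1) (hθ₁ : θ < 1) :
    1 - 2 * γ * (1 - θ) < √(Dq θ γ) := by
  rcases lt_or_ge (1 - 2 * γ * (1 - θ)) 0 with hneg | hnonneg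
  · exact hneg.trans_le (sqrt_nonneg _)
  · rw [lt_sqrt hnonneg, ← sub_pos, Dq_sub_sq]
    have : 0 < 1 - θ := sub_pos.2 hθ₁
    have : 0 < 1 - γ := sub_pos.2 hγ₁
    positivity

end Dq

theorem zeta_minus_gt_one_and_decision_boundary
    (θ γ : ℝ) (hθ : θ ∈ Set.Ioo (1 / 2 : ℝ) 1) (hγ : γ ∈ Set.Ioo (0 : ℝ) 1) :
    1 < zetaMinus θ γ ∧
      -1 / (2 * zetaMinus θ γ - 1) ∈ Set.Ioo (-1 : ℝ) 0 := by
  obtain ⟨hθ₀, hθ₁⟩ := hθ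
  obtain ⟨hγ₀, hγ₁⟩ := hγ
  have hθ : 0 < θ := by linarith
  have hden : 0 < 2 * γ * θ := by positivity
  have hx : 0 < (1 - √(Dq θ γ)) / (2 * γ * θ) :=
    div_pos (sub_pos.2 (sqrt_Dq_lt_one hγ₀ hθ hθ₁)) hden
  have hxb : (1 - √(Dq θ γ)) / (2 * γ * θ) < (1 - θ) / θ := by
    rw [div_lt_div_iff₀ hden hθ]
    linarith [mul_lt_mul_of_pos_left (one_sub_two_mul_lt_sqrt_Dq hγ₀ hγ₁ hθ₁) hθ]
  have hb : (1 - θ) / θ < 1 := by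
    rw [div_lt_one hθ]; linarith
  have hz : 1 < zetaMinus θ γ := one_lt_log_div_log_of_lt_of_lt_one hx hxb hb
  exact ⟨hz, neg_one_div_two_mul_sub_one_mem_Ioo hz⟩
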